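/- arXiv:1805.12509 — 2 statements merged into one kernel-verified Lean document; each statement's English description precedes it below -/
import Mathlib

section
/- (Proposition 1, feasibility of the bandwidth optimization problem.) Let M₀ > 0, w̄ > 0, β > 0, Δ_MT > 0, Δ_DT > 0 and R̂ > 0, and let I_MAX ≥ 0 be an integer. There exist per-round rates R₀, …, R_{I_MAX+1} with 0 < Rᵢ ≤ R̂ for every i, satisfying the migration-time constraint M₀·Σ_{i=0}^{I_MAX+1} w̄^i·∏_{l=0}^{i} R_l^{-1} ≤ Δ_MT, the downtime constraint M₀·w̄^{I_MAX+1}·∏_{m=0}^{I_MAX+1} Rₘ^{-1} ≤ Δ_DT, and the speed-up constraints β·w̄ ≤ Rᵢ for every i, if and only if the following three conditions simultaneously hold: (i) M₀·Σ_{i=0}^{I_MAX+1} w̄^i/R̂^{i+1} ≤ Δ_MT; (ii) M₀·w̄^{I_MAX+1}/R̂^{I_MAX+2} ≤ Δ_DT; and (iii) β·w̄ ≤ R̂. -/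
/-- **Proposition 1: feasibility of the minimum-energy bandwidth optimization problem.**
For `M₀ > 0`, `w̄ > 0`, `β > 0`, `Δ_MT > 0`, `Δ_DT > 0`, `R̂ > 0` and an integer
`I_MAX ≥ 0`, there exist per-round rates `0 < R i ≤ R̂` (for `i = 0, …, I_MAX+1`)
satisfying the migration-time constraint, the downtime constraint and the speed-up
constraints `β·w̄ ≤ R i`, if and only if
(i) `M₀ · Σ_{i=0}^{I_MAX+1} w̄^i / R̂^{i+1} ≤ Δ_MT`,
(ii) `M₀ · w̄^{I_MAX+1} / R̂^{I_MAX+2} ≤ Δ_DT`, and (iii) `β·w̄ ≤ R̂`. -/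
theorem bandwidth_problem_feasibility
    (IMAX : ℕ) (M₀ w β ΔMT ΔDT Rhat : ℝ)
    (hM : 0 < M₀) (hw : 0 < w) (hβ : 0 < β)
    (hMT : 0 < ΔMT) (hDT : 0 < ΔDT) (hR : 0 < Rhat) :
    (∃ R : ℕ → ℝ,
        (∀ i ≤ IMAX + 1, 0 < R i ∧ R i ≤ Rhat) ∧
        M₀ * ∑ i ∈ Finset.range (IMAX + 2),
            w ^ i * ∏ l ∈ Finset.range (i + 1), (R l)⁻¹ ≤ ΔMT ∧
        M₀ * w ^ (IMAX + 1) * ∏ m ∈ Finset.range (IMAX + 2), (R m)⁻¹ ≤ ΔDT ∧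
        (∀ i ≤ IMAX + 1, β * w ≤ R i)) ↔
      (M₀ * ∑ i ∈ Finset.range (IMAX + 2), w ^ i / Rhat ^ (i + 1) ≤ ΔMT ∧
       M₀ * w ^ (IMAX + 1) / Rhat ^ (IMAX + 2) ≤ ΔDT ∧
       β * w ≤ Rhat) := by
  constructor
  · rintro ⟨R, hbound, hmt, hdt, hspeed⟩
    have hprod : ∀ i ≤ IMAX + 1,
        (Rhat ^ (i + 1))⁻¹ ≤ ∏ l ∈ Finset.range (i + 1), (R l)⁻¹ := by
      intro i hi
      have : ∏ l ∈ Finset.range (i + 1), Rhat⁻¹ ≤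
          ∏ l ∈ Finset.range (i + 1), (R l)⁻¹ := by
        apply Finset.prod_le_prod
        · intro l _; positivity
        · intro l hl
          have hl' : l ≤ IMAX + 1 := by
            have := Finset.mem_range.mp hl; omega
          exact inv_anti₀ (hbound l hl').1 (hbound l hl').2
      simpa [Finset.prod_const, inv_pow] using this
    refine ⟨?_, ?_, ?_⟩
    · refine le_trans ?_ hmt
      apply mul_le_mul_of_nonneg_left _ hM.le
      apply Finset.sum_le_sum
      intro i hi
      rw [div_eq_mul_inv]
      exact mul_le_mul_of_nonneg_left
        (hprod i (by have := Finset.mem_range.mp hi; omega)) (by positivity)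
    · refine le_trans ?_ hdt
      rw [div_eq_mul_inv]
      exact mul_le_mul_of_nonneg_left (hprod (IMAX + 1) le_rfl) (by positivity)
    · exact le_trans (hspeed 0 (by omega)) (hbound 0 (by omega)).2
  · rintro ⟨h1, h2, h3⟩
    refine ⟨fun _ => Rhat, fun i _ => ⟨hR, le_rfl⟩, ?_, ?_, fun i _ => h3⟩
    · simpa [Finset.prod_const, inv_pow, div_eq_mul_inv] using h1
    · simpa [Finset.prod_const, inv_pow, div_eq_mul_inv] using h2
end

section
/- (SCBM total migration time formula, Eq. (3.31) for I_MAX ≥ 1.) Let Q ≥ 1 and S ≥ 1 be integers with I_MAX = Q·S ≥ 1, let M₀ > 0, w̄ > 0, and let R₀ > 0, ρ₀, …, ρ_{Q−1} > 0, R_{I_MAX+1} > 0 be the SCBM free rates, with R_i = ρ_j for all i = jS+1, …, (j+1)S. Then the memory migration time T_MT = Σ_{i=0}^{I_MAX+1} Tᵢ equals T_MT = M₀·[ 1/R₀ + w̄^{I_MAX+1}·(R₀·R_{I_MAX+1})^{-1}·∏_{m=0}^{Q−1} ρ_m^{−S} + (1/R₀)·Σ_{k=0}^{Q−1} Σ_{l=kS+1}^{(k+1)S}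 w̄^{l}·(∏_{p=0}^{k−1} ρ_p^{−S})·ρ_k^{−(l−kS)} ], where the empty product for k = 0 equals 1. -/
/-- **SCBM total migration time formula (Eq. (3.31) for `I_MAX ≥ 1`).**
With `I_MAX = Q·S` (`Q, S ≥ 1`), `M₀ > 0`, `w̄ > 0`, free rates
`R 0 > 0`, `ρ 0, …, ρ (Q-1) > 0`, `R (I_MAX+1) > 0`, the clustered rates
`R i = ρ j` for `j·S + 1 ≤ i ≤ (j+1)·S`, and the pre-copy recursion
`T 0 = M₀ / R 0`, `T (i+1) = (w̄ / R (i+1)) · T i`, the memory migration time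
`T_MT = Σ_{i=0}^{I_MAX+1} T i` equals
`M₀·[ 1/R₀ + w̄^{I_MAX+1}·(R₀·R_{I_MAX+1})⁻¹·∏_{m<Q} ρ_m^{-S}
  + (1/R₀)·Σ_{k<Q} Σ_{l=kS+1}^{(k+1)S} w̄^l·(∏_{p<k} ρ_p^{-S})·ρ_k^{-(l-kS)} ]`,
where the empty product for `k = 0` equals 1. -/
theorem scbm_migration_time_formula
    (Q S : ℕ) (hQ : 1 ≤ Q) (hS : 1 ≤ S)
    (M₀ w : ℝ) (hM : 0 < M₀) (hw : 0 < w)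
    (R ρ : ℕ → ℝ)
    (hR0 : 0 < R 0) (hρ : ∀ j < Q, 0 < ρ j) (hRlast : 0 < R (Q * S + 1))
    (hcluster : ∀ j < Q, ∀ i, j * S + 1 ≤ i → i ≤ (j + 1) * S → R i = ρ j)
    (T : ℕ → ℝ)
    (hT0 : T 0 = M₀ / R 0)
    (hTrec : ∀ i, T (i + 1) = (w / R (i + 1)) * T i) :
    ∑ i ∈ Finset.range (Q * S + 2), T i =
      M₀ * ((R 0)⁻¹
        + w ^ (Q * S + 1) * (R 0 * R (Q * S + 1))⁻¹ *
            ∏ m ∈ Finset.range Q, ((ρ m) ^ S)⁻¹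
        + (R 0)⁻¹ * ∑ k ∈ Finset.range Q, ∑ l ∈ Finset.Icc (k * S + 1) ((k + 1) * S),
            w ^ l * (∏ p ∈ Finset.range k, ((ρ p) ^ S)⁻¹) *
              ((ρ k) ^ (l - k * S))⁻¹) := by
  -- closed form for T
  have hTclosed : ∀ i, T i = M₀ * w ^ i * (R 0)⁻¹ * ∏ m ∈ Finset.range i, (R (m+1))⁻¹ := by
    intro i
    induction i with
    | zero => simp [hT0, div_eq_mul_inv]
    | succ n ih =>
        rw [hTrec n, ih, Finset.prod_range_succ, div_eq_mul_inv]
        ring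
  -- full cluster products
  have hP : ∀ k ≤ Q, ∏ m ∈ Finset.range (k*S), (R (m+1))⁻¹
      = ∏ p ∈ Finset.range k, ((ρ p)^S)⁻¹ := by
    intro k hk
    induction k with
    | zero => simp
    | succ n ih =>
        have hnQ : n < Q := hk
        have h1 : ∀ j ∈ Finset.range S, (R (n*S + j + 1))⁻¹ = (ρ n)⁻¹ := by
          intro j hj
          rw [hcluster n hnQ (n*S + j + 1) (by omega)
            (by rw [Finset.mem_range] at hj; nlinarith)]
        rw [show (n+1)*S = n*S + S from by ring, Finset.prod_range_add,
          ih (le_of_lt hnQ), Finset.prod_range_succ,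
          Finset.prod_congr rfl h1, Finset.prod_const, Finset.card_range, inv_pow]
  -- partial cluster products
  have hPpart : ∀ k < Q, ∀ j < S,
      ∏ m ∈ Finset.range (k*S + (j+1)), (R (m+1))⁻¹
        = (∏ p ∈ Finset.range k, ((ρ p)^S)⁻¹) * ((ρ k)^(j+1))⁻¹ := by
    intro k hk j hj
    have h1 : ∀ j' ∈ Finset.range (j+1), (R (k*S + j' + 1))⁻¹ = (ρ k)⁻¹ := by
      intro j' hj'
      rw [Finset.mem_range] at hj'
      rw [hcluster k hk (k*S + j' + 1) (by omega) (by nlinarith)]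
    rw [Finset.prod_range_add, hP k (le_of_lt hk),
      Finset.prod_congr rfl h1, Finset.prod_const, Finset.card_range, inv_pow]
  -- block decomposition of sums over range (q*S)
  have hblocks : ∀ (f : ℕ → ℝ) (q : ℕ),
      ∑ i ∈ Finset.range (q*S), f i
        = ∑ k ∈ Finset.range q, ∑ j ∈ Finset.range S, f (k*S + j) := by
    intro f q
    induction q with
    | zero => simp
    | succ n ih =>
        rw [show (n+1)*S = n*S + S from by ring, Finset.sum_range_add, ih,
          Finset.sum_range_succ]
  -- split LHS
  rw [Finset.sum_range_succ, Finset.sum_range_succ']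
  rw [hblocks (fun i => T (i+1)) Q]
  -- rewrite middle sum terms
  have hmid : ∀ k ∈ Finset.range Q, ∑ j ∈ Finset.range S, T (k*S + j + 1)
      = M₀ * (R 0)⁻¹ * ∑ l ∈ Finset.Icc (k * S + 1) ((k + 1) * S),
          w ^ l * (∏ p ∈ Finset.range k, ((ρ p) ^ S)⁻¹) * ((ρ k) ^ (l - k * S))⁻¹ := by
    intro k hk
    rw [Finset.mem_range] at hk
    have : Finset.Icc (k * S + 1) ((k + 1) * S) = Finset.Ico (k*S+1) ((k+1)*S + 1) := by
      rw [Finset.Ico_add_one_right_eq_Icc]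
    rw [this, Finset.sum_Ico_eq_sum_range,
      show (k+1)*S + 1 - (k*S+1) = S from by ring_nf; omega, Finset.mul_sum]
    apply Finset.sum_congr rfl
    intro j hj
    rw [Finset.mem_range] at hj
    rw [show k*S + j + 1 = k*S + (j+1) from by ring, hTclosed,
      hPpart k hk j hj,
      show k*S + 1 + j - k*S = j + 1 from by omega,
      show k*S + 1 + j = k*S + (j+1) from by ring]
    ring
  rw [Finset.sum_congr rfl hmid, ← Finset.mul_sum]
  -- final term
  rw [hTclosed (Q*S + 1), Finset.prod_range_succ, hP Q le_rfl, hT0, div_eq_mul_inv]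
  ring
end
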